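/- arXiv:2204.02882 — 2 statements merged into one kernel-verified Lean document; each statement's English description precedes it below -/
import Mathlib

section
/- Let X be a continuum irreducible between points a and b, and let A = {x ∈ X : X is irreducible between x and b}. If the closure of A has nonempty interior in X, then the closure of A is an indecomposable continuum. -/
/-!
Call a proper subcontinuum containing `b` a `b`-continuum; irreducibility of `X` between `x` and
`b` says exactly that `x` lies in no `b`-continuum, so `A` misses all of them. The complement of a
`b`-continuum is connected (the continuum together with the piece of its complement containing `a`
would be a proper subcontinuum through `a` and `b`). Every point `z ∉ closure A` lies in the
interior of some `b`-continuum: the component `P` of `a` outside a small neighbourhood of `z`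
reaches that neighbourhood by boundary bumping, so it meets a `b`-continuum `Q`, whence
`Q ∪ P = X`, `closure A ⊆ P` and `closure Pᶜ` is a `b`-continuum, proper because
`interior (closure A) ≠ ∅`. Since `b`-continua form a directed family, a separation of
`closure A` would extend to a separation of the connected complement of a single `b`-continuum.
Finally, a subcontinuum `P ⊆ closure A` with nonempty interior contains some `x ∈ A` in its
interior; the component of `b` in `X \ interior P` reaches `P`, so together with `P` it is `X`,
and `A` lies in `P`. As one of two closed sets covering `closure A` has interior, `closure A` is
indecomposable.
-/

open Set Topology

/-- The meager composant of `x`: the union of all nowhere dense subcontinua containing `x`. -/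
def MeagerComposant (X : Type) [TopologicalSpace X] (x : X) : Set X :=
  ⋃₀ {L : Set X | IsCompact L ∧ IsConnected L ∧ IsNowhereDense L ∧ x ∈ L}

/-- A continuum is hereditarily unicoherent if the intersection of any two subcontinua
is connected (possibly empty, hence preconnected). -/
def HereditarilyUnicoherent (X : Type) [TopologicalSpace X] : Prop :=
  ∀ A B : Set X, IsCompact A → IsConnected A → IsCompact B → IsConnected B →
    IsPreconnected (A ∩ B)

/-- A subcontinuum `A` of `X` is ample if every open neighborhood of `A` contains a
subcontinuum having `A` in its interior. -/
def Ample {X : Type} [TopologicalSpace X] (A : Set X) : Prop :=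
  ∀ U : Set X, IsOpen U → A ⊆ U →
    ∃ K : Set X, IsCompact K ∧ IsPreconnected K ∧ A ⊆ interior K ∧ K ⊆ U

/-- A set `C` is indecomposable if it is not the union of two proper subcontinua. -/
def IndecomposableSet {X : Type} [TopologicalSpace X] (C : Set X) : Prop :=
  ¬ ∃ H K : Set X, IsCompact H ∧ IsConnected H ∧ IsCompact K ∧ IsConnected K ∧
    H ⊆ C ∧ K ⊆ C ∧ H ≠ C ∧ K ≠ C ∧ H ∪ K = C

section Continua

variable {X : Type*} [TopologicalSpace X]

theorem exists_isClopen_of_connectedComponent_subset [CompactSpace X] [T2Space X] {x : X}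
    {U : Set X} (hU : IsOpen U) (hxU : connectedComponent x ⊆ U) :
    ∃ Z, IsClopen Z ∧ x ∈ Z ∧ Z ⊆ U := by
  have hK : IsClosed (ConnectedComponents.mk '' Uᶜ) :=
    (hU.isClosed_compl.isCompact.image ConnectedComponents.continuous_coe).isClosed
  have hx : ConnectedComponents.mk x ∉ ConnectedComponents.mk '' Uᶜ := by
    rintro ⟨w, hwU, hwx⟩
    exact hwU (hxU (ConnectedComponents.coe_eq_coe'.mp hwx))
  obtain ⟨V, hV, hxV, hVK⟩ := compact_exists_isClopen_in_isOpen hK.isOpen_compl hx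
  exact ⟨ConnectedComponents.mk ⁻¹' V, hV.preimage ConnectedComponents.continuous_coe, hxV,
    fun w hwV => by_contra fun hwU => hVK hwV ⟨w, hwU, rfl⟩⟩

theorem IsClosed.connectedComponentIn {F : Set X} (hF : IsClosed F) (x : X) :
    IsClosed (connectedComponentIn F x) := by
  by_cases hx : x ∈ F
  · refine closure_subset_iff_isClosed.mp <|
      isPreconnected_connectedComponentIn.closure.subset_connectedComponentIn
        (subset_closure (mem_connectedComponentIn hx))
        (closure_minimal (connectedComponentIn_subset F x) hF)
  · rw [connectedComponentIn_eq_empty hx]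
    exact isClosed_empty

theorem connectedComponentIn_inter_frontier_nonempty [CompactSpace X] [T2Space X]
    [ConnectedSpace X] {F : Set X} (hF : IsClosed F) (hFne : F ≠ univ) {x : X} (hx : x ∈ F) :
    (connectedComponentIn F x ∩ frontier F).Nonempty := by
  by_contra hempty
  have : CompactSpace F := isCompact_iff_compactSpace.mp hF.isCompact
  have hsub : connectedComponent (⟨x, hx⟩ : F) ⊆ (↑) ⁻¹' interior F := by
    intro w hw
    by_contra hwint
    refine hempty ⟨w, ?_, by rw [hF.frontier_eq]; exact ⟨w.2, hwint⟩⟩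
    rw [connectedComponentIn_eq_image hx]
    exact mem_image_of_mem _ hw
  -- Components of the compact space `F` are quasi-components, so some clopen subset of `F`
  -- around `x` avoids the frontier; it is then clopen in `X`.
  obtain ⟨Z, hZ, hxZ, hZint⟩ := exists_isClopen_of_connectedComponent_subset
    (isOpen_interior.preimage continuous_subtype_val) hsub
  obtain ⟨O, hO, rfl⟩ := isOpen_induced_iff.mp hZ.isOpen
  have hZX : IsClopen (((↑) : F → X) '' ((↑) ⁻¹' O)) := by
    refine ⟨hF.isClosedEmbedding_subtypeVal.isClosedMap _ hZ.isClosed, ?_⟩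
    have : ((↑) : F → X) '' ((↑) ⁻¹' O) = interior F ∩ O := by
      rw [Subtype.image_preimage_coe]
      exact Subset.antisymm (fun p ⟨hpF, hpO⟩ => ⟨@hZint ⟨p, hpF⟩ hpO, hpO⟩)
        (fun p hp => ⟨interior_subset hp.1, hp.2⟩)
    exact this ▸ isOpen_interior.inter hO
  rcases isClopen_iff.mp hZX with h | h
  · exact (h ▸ mem_image_of_mem _ hxZ : x ∈ (∅ : Set X))
  · exact hFne (eq_univ_of_univ_subset (h ▸ Subtype.coe_image_subset F _))

theorem IsPreconnected.union_of_isOpen [ConnectedSpace X] {K U : Set X} (hK : IsPreconnected K)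
    (hKne : K.Nonempty) (hU : IsOpen U) (hKU : IsClosed (K ∪ U)) :
    IsPreconnected (K ∪ U) := by
  rw [isPreconnected_iff_subset_of_fully_disjoint_closed hKU]
  intro P Q hP hQ hcov hPQ
  wlog hKP : K ⊆ P generalizing P Q
  · have hKQ := (isPreconnected_iff_subset_of_disjoint_closed.mp hK P Q hP hQ
      (subset_union_left.trans hcov) (by rw [hPQ.inter_eq, inter_empty])).resolve_left hKP
    exact (this Q P hQ hP (union_comm P Q ▸ hcov) hPQ.symm hKQ).symm
  have hQU : (K ∪ U) ∩ Q = U ∩ Pᶜ := by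
    ext y
    have hy : y ∈ K ∨ y ∈ U → y ∈ P ∨ y ∈ Q := @hcov y
    have := hPQ.notMem_of_mem_left (a := y)
    have := @hKP y
    simp only [mem_inter_iff, mem_union, mem_compl_iff]
    tauto
  have hclopen : IsClopen ((K ∪ U) ∩ Q) :=
    ⟨hKU.inter hQ, hQU ▸ hU.inter hP.isOpen_compl⟩
  rcases isClopen_iff.mp hclopen with hempty | huniv
  · left
    intro y hy
    exact (hcov hy).resolve_right fun hyQ => (hempty ▸ ⟨hy, hyQ⟩ : y ∈ (∅ : Set X))
  · obtain ⟨k, hk⟩ := hKne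
    have hkQ : k ∈ (K ∪ U) ∩ Q := huniv ▸ mem_univ k
    exact (hPQ.notMem_of_mem_right hkQ.2 (hKP hk)).elim

def IrreducibleBetween (x y : X) : Prop :=
  ∀ K : Set X, IsCompact K → IsConnected K → x ∈ K → y ∈ K → K = univ

theorem IrreducibleBetween.symm {x y : X} (h : IrreducibleBetween x y) : IrreducibleBetween y x :=
  fun K hK hKc hy hx => h K hK hKc hx hy

theorem IrreducibleBetween.isPreconnected_compl [CompactSpace X] [ConnectedSpace X] {p q : X}
    (hpq : IrreducibleBetween p q) {K : Set X} (hKcl : IsClosed K) (hK : IsPreconnected K)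
    (hp : p ∈ K) (hq : q ∉ K) : IsPreconnected Kᶜ := by
  rw [isPreconnected_iff_subset_of_disjoint]
  intro u v hu hv hcov huv
  wlog hqu : q ∈ u generalizing u v
  · exact (this v u hv hu (union_comm u v ▸ hcov) (inter_comm u v ▸ huv)
      ((hcov hq).resolve_left hqu)).symm
  have hM : K ∪ (Kᶜ ∩ u) = (Kᶜ ∩ v)ᶜ := by
    ext y
    have hy : y ∉ K → y ∈ u ∨ y ∈ v := @hcov y
    have hy' : y ∉ K → y ∈ u → y ∈ v → False := fun h1 h2 h3 =>
      (huv ▸ ⟨h1, h2, h3⟩ : y ∈ (∅ : Set X))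
    simp only [mem_union, mem_inter_iff, mem_compl_iff]
    tauto
  have hMcl : IsClosed (K ∪ (Kᶜ ∩ u)) := hM ▸ (hKcl.isOpen_compl.inter hv).isClosed_compl
  have hMuniv := hpq _ hMcl.isCompact
    ⟨⟨p, .inl hp⟩, hK.union_of_isOpen ⟨p, hp⟩ (hKcl.isOpen_compl.inter hu) hMcl⟩
    (.inl hp) (.inr ⟨hq, hqu⟩)
  exact .inl fun y hy => ((hMuniv ▸ mem_univ y : y ∈ K ∪ (Kᶜ ∩ u)).resolve_left hy).2

def irreducibleSet (b : X) : Set X := {x | IrreducibleBetween x b}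

structure IsProperSubcontinuumThrough (b : X) (K : Set X) : Prop where
  isCompact : IsCompact K
  isPreconnected : IsPreconnected K
  mem : b ∈ K
  ne_univ : K ≠ univ

namespace IsProperSubcontinuumThrough

variable {a b : X} {K L : Set X}

theorem notMem_of_irreducibleBetween (hK : IsProperSubcontinuumThrough b K) {x : X}
    (hx : IrreducibleBetween x b) : x ∉ K := fun hxK =>
  hK.ne_univ (hx K hK.isCompact ⟨⟨x, hxK⟩, hK.isPreconnected⟩ hxK hK.mem)

theorem disjoint_irreducibleSet (hK : IsProperSubcontinuumThrough b K) :
    Disjoint (irreducibleSet b) K :=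
  disjoint_left.mpr fun _ hx => hK.notMem_of_irreducibleBetween hx

theorem union (hab : IrreducibleBetween a b) (hK : IsProperSubcontinuumThrough b K)
    (hL : IsProperSubcontinuumThrough b L) : IsProperSubcontinuumThrough b (K ∪ L) where
  isCompact := hK.isCompact.union hL.isCompact
  isPreconnected := hK.isPreconnected.union b hK.mem hL.mem hL.isPreconnected
  mem := .inl hK.mem
  ne_univ h := (h ▸ mem_univ a : a ∈ K ∪ L).elim (hK.notMem_of_irreducibleBetween hab)
    (hL.notMem_of_irreducibleBetween hab)

theorem irreducibleSet_subset_of_union_eq_univ (hK : IsProperSubcontinuumThrough b K)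
    {P : Set X} (hKP : K ∪ P = univ) : irreducibleSet b ⊆ P := fun x hx =>
  ((hKP ▸ mem_univ x : x ∈ K ∪ P)).resolve_left (hK.notMem_of_irreducibleBetween hx)

end IsProperSubcontinuumThrough

theorem exists_isProperSubcontinuumThrough_of_not_irreducibleBetween {b x : X}
    (hx : ¬ IrreducibleBetween x b) : ∃ K, IsProperSubcontinuumThrough b K ∧ x ∈ K := by
  simp only [IrreducibleBetween, not_forall] at hx
  obtain ⟨K, hK, hKc, hxK, hbK, hKne⟩ := hx
  exact ⟨K, ⟨hK, hKc.isPreconnected, hbK, hKne⟩, hxK⟩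

variable [CompactSpace X] [ConnectedSpace X] {a b : X}

theorem IrreducibleBetween.isProperSubcontinuumThrough_closure_compl (hab : IrreducibleBetween a b)
    {P : Set X} (hP : IsClosed P) (hPc : IsPreconnected P) (haP : a ∈ P) (hbP : b ∉ P)
    (hint : (interior P).Nonempty) : IsProperSubcontinuumThrough b (closure Pᶜ) where
  isCompact := isClosed_closure.isCompact
  isPreconnected := (hab.isPreconnected_compl hP hPc haP hbP).closure
  mem := subset_closure hbP
  ne_univ h := by
    obtain ⟨y, hy⟩ := hint
    exact (closure_compl (s := P) ▸ h ▸ mem_univ y : y ∈ (interior P)ᶜ) hy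

variable [T2Space X]

theorem irreducibleSet_subset_of_mem_interior {x : X} (hx : IrreducibleBetween x b) {P : Set X}
    (hP : IsCompact P) (hPc : IsPreconnected P) (hxP : x ∈ interior P) :
    irreducibleSet b ⊆ P := by
  by_cases hbP : b ∈ P
  · rw [hx P hP ⟨⟨b, hbP⟩, hPc⟩ (interior_subset hxP) hbP]
    exact subset_univ _
  set F := (interior P)ᶜ
  have hbF : b ∈ F := fun hb => hbP (interior_subset hb)
  obtain ⟨w, hwQ, hwF⟩ := connectedComponentIn_inter_frontier_nonempty
    isOpen_interior.isClosed_compl (fun h : F = univ => (h ▸ mem_univ x : x ∈ F) hxP) hbF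
  have hwP : w ∈ P := by
    rw [frontier_compl] at hwF
    exact closure_minimal interior_subset hP.isClosed (frontier_subset_closure hwF)
  have hQ : IsProperSubcontinuumThrough b (connectedComponentIn F b) :=
    { isCompact := (isOpen_interior.isClosed_compl.connectedComponentIn b).isCompact
      isPreconnected := isPreconnected_connectedComponentIn
      mem := mem_connectedComponentIn hbF
      ne_univ := fun h => connectedComponentIn_subset F b (h ▸ mem_univ x) hxP }
  refine hQ.irreducibleSet_subset_of_union_eq_univ ?_
  exact hx.symm _ (hQ.isCompact.union hP)
    ⟨⟨b, .inl hQ.mem⟩, hQ.isPreconnected.union w hwQ hwP hPc⟩ (.inl hQ.mem)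
    (.inr (interior_subset hxP))

theorem IrreducibleBetween.exists_isProperSubcontinuumThrough_mem_interior
    (hab : IrreducibleBetween a b) (hint : (interior (closure (irreducibleSet b))).Nonempty)
    {z : X} (hz : z ∉ closure (irreducibleSet b)) :
    ∃ K, IsProperSubcontinuumThrough b K ∧ z ∈ interior K := by
  set A := irreducibleSet b
  obtain ⟨U, ⟨hzU, hU⟩, hUA⟩ :=
    (hasBasis_opens_closure z).mem_iff.mp (isClosed_closure.isOpen_compl.mem_nhds hz)
  have haU : a ∉ U := fun h => hUA (subset_closure h) (subset_closure (show a ∈ A from hab))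
  set P := connectedComponentIn Uᶜ a
  have hPcl : IsClosed P := hU.isClosed_compl.connectedComponentIn a
  have hPc : IsPreconnected P := isPreconnected_connectedComponentIn
  have haP : a ∈ P := mem_connectedComponentIn haU
  have hzP : z ∉ P := fun h => connectedComponentIn_subset _ _ h hzU
  have hAP : A ⊆ P := by
    obtain ⟨p, hpP, hpA⟩ := not_subset.mp fun hPA : P ⊆ A => by
      obtain ⟨w, hwP, hwU⟩ := connectedComponentIn_inter_frontier_nonempty hU.isClosed_compl
        (fun h : Uᶜ = univ => (h ▸ mem_univ z : z ∈ Uᶜ) hzU) haU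
      rw [frontier_compl] at hwU
      exact hUA (frontier_subset_closure hwU) (subset_closure (hPA hwP))
    obtain ⟨Q, hQ, hpQ⟩ := exists_isProperSubcontinuumThrough_of_not_irreducibleBetween hpA
    exact hQ.irreducibleSet_subset_of_union_eq_univ <| hab _ (hQ.isCompact.union hPcl.isCompact)
      ⟨⟨b, .inl hQ.mem⟩, hQ.isPreconnected.union p hpQ hpP hPc⟩ (.inr haP) (.inl hQ.mem)
  have hbP : b ∉ P := fun hbP =>
    hzP (hab P hPcl.isCompact ⟨⟨a, haP⟩, hPc⟩ haP hbP ▸ mem_univ z)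
  refine ⟨closure Pᶜ, hab.isProperSubcontinuumThrough_closure_compl hPcl hPc haP hbP
    (hint.mono (interior_mono (closure_minimal hAP hPcl))), ?_⟩
  exact interior_mono subset_closure (hPcl.isOpen_compl.interior_eq.symm ▸ hzP)

theorem IrreducibleBetween.exists_isClosed_subset_interior (hab : IrreducibleBetween a b)
    (hint : (interior (closure (irreducibleSet b))).Nonempty) {Z : Set X} (hZ : IsCompact Z)
    (hZA : Disjoint Z (closure (irreducibleSet b))) :
    ∃ K, IsClosed K ∧ IsPreconnected Kᶜ ∧ Disjoint (irreducibleSet b) K ∧ Z ⊆ interior K := by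
  rcases Z.eq_empty_or_nonempty with rfl | ⟨z, hz⟩
  · exact ⟨∅, isClosed_empty, compl_empty ▸ isPreconnected_univ, disjoint_empty _,
      empty_subset _⟩
  have hcover : ∀ y ∈ Z, ∃ K, IsProperSubcontinuumThrough b K ∧ y ∈ interior K := fun y hy =>
    hab.exists_isProperSubcontinuumThrough_mem_interior hint (hZA.notMem_of_mem_left hy)
  have : Nonempty {K // IsProperSubcontinuumThrough b K} :=
    let ⟨K, hK, _⟩ := hcover z hz; ⟨⟨K, hK⟩⟩
  obtain ⟨⟨K, hK⟩, hZK⟩ := hZ.elim_directed_cover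
    (fun K : {K // IsProperSubcontinuumThrough b K} => interior K.1)
    (fun _ => isOpen_interior)
    (fun y hy => let ⟨K, hK, hyK⟩ := hcover y hy; mem_iUnion.mpr ⟨⟨K, hK⟩, hyK⟩)
    (fun K L => ⟨⟨_, K.2.union hab L.2⟩, interior_mono subset_union_left,
      interior_mono subset_union_right⟩)
  exact ⟨K, hK.isCompact.isClosed, hab.symm.isPreconnected_compl hK.isCompact.isClosed
    hK.isPreconnected hK.mem (hK.notMem_of_irreducibleBetween hab), hK.disjoint_irreducibleSet,
    hZK⟩

theorem IrreducibleBetween.isPreconnected_closure_irreducibleSet (hab : IrreducibleBetween a b)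
    (hint : (interior (closure (irreducibleSet b))).Nonempty) :
    IsPreconnected (closure (irreducibleSet b)) := by
  rw [isPreconnected_iff_subset_of_fully_disjoint_closed isClosed_closure]
  intro P Q hP hQ hcov hPQ
  obtain ⟨u, v, hu, hv, hPu, hQv, huv⟩ := normal_separation hP hQ hPQ
  obtain ⟨K, hK, hKc, hAK, huvK⟩ := hab.exists_isClosed_subset_interior hint
    (hu.union hv).isClosed_compl.isCompact
    (disjoint_compl_left_iff_subset.mpr (hcov.trans (union_subset_union hPu hQv)))
  have hKuv : Kᶜ ⊆ u ∪ v := compl_subset_comm.mp (huvK.trans interior_subset)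
  wlog hKu : Kᶜ ⊆ u generalizing P Q u v
  · exact (this Q P hQ hP (union_comm P Q ▸ hcov) hPQ.symm v u hv hu hQv hPu huv.symm
      (union_comm u v ▸ huvK) (union_comm u v ▸ hKuv)
      ((hKc.subset_or_subset hu hv huv hKuv).resolve_left hKu)).symm
  refine .inl fun y hy => (hcov hy).resolve_right fun hyQ => ?_
  have hyu : y ∈ closure u := closure_mono (hAK.subset_compl_right.trans hKu) hy
  exact (huv.closure_left hv).notMem_of_mem_left hyu (hQv hyQ)

theorem eq_closure_irreducibleSet_of_interior_nonempty {P : Set X} (hP : IsCompact P)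
    (hPc : IsPreconnected P) (hPA : P ⊆ closure (irreducibleSet b))
    (hint : (interior P).Nonempty) :
    P = closure (irreducibleSet b) := by
  obtain ⟨x, hxA, hxP⟩ := (closure_inter_open_nonempty_iff isOpen_interior).mp
    (by rwa [inter_eq_right.mpr (interior_subset.trans hPA)])
  exact hPA.antisymm (closure_minimal
    (irreducibleSet_subset_of_mem_interior hxA hP hPc hxP) hP.isClosed)

end Continua

theorem indecomposableSet_closure_irreducibleSet {X : Type} [TopologicalSpace X] [CompactSpace X]
    [T2Space X] [ConnectedSpace X] {b : X}
    (hint : (interior (closure (irreducibleSet b))).Nonempty) :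
    IndecomposableSet (closure (irreducibleSet b)) := by
  rintro ⟨H, K, hH, hHc, hK, hKc, hHA, hKA, hHne, hKne, hHK⟩
  by_cases hKint : (interior K).Nonempty
  · exact hKne (eq_closure_irreducibleSet_of_interior_nonempty hK hKc.isPreconnected hKA hKint)
  · rw [not_nonempty_iff_eq_empty] at hKint
    refine hHne (eq_closure_irreducibleSet_of_interior_nonempty hH hHc.isPreconnected hHA ?_)
    rwa [← interior_union_isClosed_of_interior_empty hH.isClosed hKint, hHK]

theorem closure_irreducibleSet_indecomposable_general (X : Type) [MetricSpace X] [CompactSpace X] [ConnectedSpace X] (a b : X)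
    (hirr : ∀ K : Set X, IsCompact K → IsConnected K → a ∈ K → b ∈ K → K = Set.univ)
    (A : Set X)
    (hA : A = {x : X | ∀ K : Set X, IsCompact K → IsConnected K → x ∈ K → b ∈ K →
      K = Set.univ})
    (hint : (interior (closure A)).Nonempty) :
    IsCompact (closure A) ∧ IsConnected (closure A) ∧ IndecomposableSet (closure A) := by
  change A = irreducibleSet b at hA
  change IrreducibleBetween a b at hirr
  subst hA
  exact ⟨isClosed_closure.isCompact, ⟨⟨a, subset_closure hirr⟩,
    hirr.isPreconnected_closure_irreducibleSet hint⟩, indecomposableSet_closure_irreducibleSet hint⟩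

/-- If `X` is a continuum irreducible between `a` and `b`, and the closure of the set
`A = {x | X is irreducible between x and b}` has nonempty interior, then the closure
of `A` is an indecomposable continuum. -/
theorem closure_irreducibleSet_indecomposable (X : Type) [MetricSpace X] [CompactSpace X] [ConnectedSpace X] [Nonempty X] (a b : X)
    (hirr : ∀ K : Set X, IsCompact K → IsConnected K → a ∈ K → b ∈ K → K = Set.univ)
    (A : Set X)
    (hA : A = {x : X | ∀ K : Set X, IsCompact K → IsConnected K → x ∈ K → b ∈ K →
      K = Set.univ})
    (hint : (interior (closure A)).Nonempty) :
    IsCompact (closure A) ∧ IsConnected (closure A) ∧ IndecomposableSet (closure A) :=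
  closure_irreducibleSet_indecomposable_general X a b hirr A hA hint
end

section
/- Let X be a hereditarily unicoherent continuum and x ∈ X. If the meager composant M_x is not closed in X, then the closure of M_x contains an indecomposable subcontinuum with nonempty interior in X. -/
/-!
In a hereditarily unicoherent continuum every set `F` lies in a smallest subcontinuum
`⟨F⟩`, and `M_x = {m | ⟨x, m⟩ is nowhere dense}`; since `⟨a, c⟩ ⊆ ⟨a, b⟩ ∪ ⟨b, c⟩`, the
meager composants partition `X`. Pick `z ∈ cl M_x \ M_x`; then `S = cl M_x ∩ cl M_z` is a
continuum.

If `S` has interior, it contains `m ∈ M_x` and `a ∈ M_z` with `V = int ⟨m, a⟩ ≠ ∅`, and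
then `V ⊆ ⟨b, c⟩` for all `b ∈ M_x`, `c ∈ M_z`. Both classes are dense in `V`, so if
`⟨cl V⟩ = H ∪ K` with `V ⊄ H`, the open set `V \ H` contains such `b, c`, forcing
`⟨cl V⟩ ⊆ K`.

If `S` is nowhere dense, `V = int ⟨x, z⟩ ≠ ∅` and `V ⊆ ⟨m, ζ⟩` for `m ∈ M_x`, `ζ ∈ S`.
By Zorn there is a minimal subcontinuum `Z ⊇ cl V` meeting `S`. If `Z = H ∪ K` with
`ζ ∈ H ∩ S`, minimality keeps `M_x` out of `H`, so `H` is nowhere dense, `cl V ⊆ K`, and a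
point of `H ∩ K` lies in `S`, making `K` a smaller competitor.
-/

open Set Topology

section NowhereDense

variable {X : Type*} [TopologicalSpace X] {s t U K : Set X}

theorem IsNowhereDense.union (hs : IsNowhereDense s) (ht : IsNowhereDense t) :
    IsNowhereDense (s ∪ t) := by
  rw [IsNowhereDense, closure_union,
    interior_union_isClosed_of_interior_empty isClosed_closure ht, hs]

theorem IsOpen.subset_of_subset_union_isNowhereDense (hU : IsOpen U) (hK : IsClosed K)
    (hs : IsNowhereDense s) (hUKs : U ⊆ K ∪ s) : U ⊆ K := by
  have hsub : U \ K ⊆ interior (closure s) :=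
    interior_maximal (fun u hu => subset_closure ((hUKs hu.1).resolve_left hu.2))
      (hU.sdiff hK)
  rw [hs, subset_empty_iff, sdiff_eq_empty] at hsub
  exact hsub

end NowhereDense

theorem IsPreconnected.sInter_of_directedOn {X : Type*} [TopologicalSpace X] [T2Space X]
    {S : Set (Set X)} (hS : S.Nonempty) (hd : DirectedOn (· ⊇ ·) S)
    (hc : ∀ K ∈ S, IsCompact K) (hp : ∀ K ∈ S, IsPreconnected K) :
    IsPreconnected (⋂₀ S) := by
  obtain ⟨K₀, hK₀⟩ := hS
  have hcl : IsClosed (⋂₀ S) := isClosed_sInter fun K hK => (hc K hK).isClosed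
  have hcpt : IsCompact (⋂₀ S) :=
    (hc K₀ hK₀).of_isClosed_subset hcl (sInter_subset_of_mem hK₀)
  rw [isPreconnected_iff_subset_of_fully_disjoint_closed hcl]
  intro u v hu hv huv hdisj
  obtain ⟨U, V, hU, hV, huU, hvV, hUV⟩ :=
    SeparatedNhds.of_isCompact_isCompact (hcpt.inter_right hu) (hcpt.inter_right hv)
      (hdisj.mono inter_subset_right inter_subset_right)
  have : Nonempty S := ⟨⟨K₀, hK₀⟩⟩
  obtain ⟨⟨K, hK⟩, hKUV⟩ := exists_subset_nhds_of_isCompact (V := fun K : S => (K : Set X))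
    hd.directed_val (fun K => hc K K.2) (U := U ∪ V) fun y hy => (hU.union hV).mem_nhds <| by
      rw [← sInter_eq_iInter] at hy
      exact (huv hy).imp (fun h => huU ⟨hy, h⟩) (fun h => hvV ⟨hy, h⟩)
  have hSK : ⋂₀ S ⊆ K := sInter_subset_of_mem hK
  rcases (hp K hK).subset_or_subset hU hV hUV hKUV with hKU | hKV
  · exact Or.inl fun y hy => (huv hy).resolve_right fun hyv =>
      hUV.notMem_of_mem_left (hKU (hSK hy)) (hvV ⟨hy, hyv⟩)
  · exact Or.inr fun y hy => (huv hy).resolve_left fun hyu =>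
      hUV.notMem_of_mem_left (huU ⟨hy, hyu⟩) (hKV (hSK hy))

section ContinuumHull

variable {X : Type} [TopologicalSpace X]

def continuumHull (F : Set X) : Set X :=
  ⋂₀ {K | IsCompact K ∧ IsPreconnected K ∧ F ⊆ K}

theorem subset_continuumHull (F : Set X) : F ⊆ continuumHull F :=
  subset_sInter fun _ hK => hK.2.2

theorem continuumHull_subset {F K : Set X} (hK : IsCompact K) (hKp : IsPreconnected K)
    (hFK : F ⊆ K) : continuumHull F ⊆ K :=
  sInter_subset_of_mem ⟨hK, hKp, hFK⟩

theorem continuumHull_pair_subset {a b : X} {K : Set X} (hK : IsCompact K)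
    (hKp : IsPreconnected K) (ha : a ∈ K) (hb : b ∈ K) : continuumHull {a, b} ⊆ K :=
  continuumHull_subset hK hKp (pair_subset ha hb)

theorem left_mem_continuumHull (a b : X) : a ∈ continuumHull {a, b} :=
  subset_continuumHull _ (mem_insert a _)

theorem right_mem_continuumHull (a b : X) : b ∈ continuumHull {a, b} :=
  subset_continuumHull _ (mem_insert_of_mem a rfl)

variable [T2Space X]

theorem isClosed_continuumHull (F : Set X) : IsClosed (continuumHull F) :=
  isClosed_sInter fun _ hK => hK.1.isClosed

variable [CompactSpace X]

theorem isCompact_continuumHull (F : Set X) : IsCompact (continuumHull F) :=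
  (isClosed_continuumHull F).isCompact

variable [PreconnectedSpace X]

theorem isPreconnected_continuumHull (hX : HereditarilyUnicoherent X)
    (F : Set X) : IsPreconnected (continuumHull F) := by
  rcases F.eq_empty_or_nonempty with rfl | hF
  · rw [subset_empty_iff.mp (continuumHull_subset isCompact_empty isPreconnected_empty
      subset_rfl)]
    exact isPreconnected_empty
  refine IsPreconnected.sInter_of_directedOn ⟨univ, isCompact_univ, isPreconnected_univ,
    subset_univ F⟩ ?_ (fun K hK => hK.1) (fun K hK => hK.2.1)
  rintro K ⟨hK, hKp, hFK⟩ L ⟨hL, hLp, hFL⟩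
  exact ⟨K ∩ L, ⟨hK.inter_right hL.isClosed,
    hX K L hK ⟨hF.mono hFK, hKp⟩ hL ⟨hF.mono hFL, hLp⟩, subset_inter hFK hFL⟩,
    inter_subset_left, inter_subset_right⟩

theorem continuumHull_pair_subset_union (hX : HereditarilyUnicoherent X) (a b c : X) :
    continuumHull {a, c} ⊆ continuumHull {a, b} ∪ continuumHull {b, c} :=
  continuumHull_pair_subset ((isCompact_continuumHull _).union (isCompact_continuumHull _))
    ((isPreconnected_continuumHull hX _).union b (right_mem_continuumHull a b)
      (left_mem_continuumHull b c) (isPreconnected_continuumHull hX _))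
    (Or.inl (left_mem_continuumHull a b)) (Or.inr (right_mem_continuumHull b c))

theorem IsNowhereDense.continuumHull_pair_trans (hX : HereditarilyUnicoherent X) {a b c : X}
    (hab : IsNowhereDense (continuumHull {a, b})) (hbc : IsNowhereDense (continuumHull {b, c})) :
    IsNowhereDense (continuumHull {a, c}) :=
  (hab.union hbc).mono (continuumHull_pair_subset_union hX a b c)

theorem IsOpen.subset_continuumHull_pair (hX : HereditarilyUnicoherent X) {V : Set X}
    (hV : IsOpen V) {a b c : X} (hVac : V ⊆ continuumHull {a, c})
    (hcb : IsNowhereDense (continuumHull {c, b})) : V ⊆ continuumHull {a, b} := by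
  rw [pair_comm] at hcb
  exact hV.subset_of_subset_union_isNowhereDense (isClosed_continuumHull _) hcb
    (hVac.trans (continuumHull_pair_subset_union hX a b c))

end ContinuumHull

section MeagerComposant

variable {X : Type} [TopologicalSpace X]

theorem isPreconnected_meagerComposant (x : X) : IsPreconnected (MeagerComposant X x) :=
  isPreconnected_sUnion x _ (fun _ hL => hL.2.2.2) fun _ hL => hL.2.1.2

theorem self_mem_meagerComposant {x : X} (h : (MeagerComposant X x).Nonempty) :
    x ∈ MeagerComposant X x := by
  obtain ⟨_, L, hL, _⟩ := h
  exact ⟨L, hL, hL.2.2.2⟩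

theorem mem_meagerComposant_iff [T2Space X] [CompactSpace X] [PreconnectedSpace X]
    (hX : HereditarilyUnicoherent X) {x m : X} :
    m ∈ MeagerComposant X x ↔ IsNowhereDense (continuumHull {x, m}) := by
  constructor
  · rintro ⟨L, ⟨hL, hLc, hLn, hxL⟩, hmL⟩
    exact hLn.mono (continuumHull_pair_subset hL hLc.2 hxL hmL)
  · intro h
    exact ⟨_, ⟨isCompact_continuumHull _, ⟨⟨x, left_mem_continuumHull x m⟩,
      isPreconnected_continuumHull hX _⟩, h, left_mem_continuumHull x m⟩,
      right_mem_continuumHull x m⟩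

theorem isPreconnected_closure_inter_closure [CompactSpace X] (hX : HereditarilyUnicoherent X)
    {s t : Set X} (hs : IsPreconnected s) (ht : IsPreconnected t) :
    IsPreconnected (closure s ∩ closure t) := by
  rcases s.eq_empty_or_nonempty with rfl | hs'
  · simpa using isPreconnected_empty
  rcases t.eq_empty_or_nonempty with rfl | ht'
  · simpa using isPreconnected_empty
  exact hX _ _ isClosed_closure.isCompact ⟨hs'.closure, hs.closure⟩
    isClosed_closure.isCompact ⟨ht'.closure, ht.closure⟩

end MeagerComposant

section Indecomposable

variable {X : Type} [TopologicalSpace X] [T2Space X]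

def continuaMeeting (A S : Set X) : Set (Set X) :=
  {K | IsCompact K ∧ IsPreconnected K ∧ A ⊆ K ∧ (K ∩ S).Nonempty}

theorem exists_minimal_continuaMeeting {A S K₀ : Set X} (hS : IsClosed S)
    (hK₀ : K₀ ∈ continuaMeeting A S) :
    ∃ Z ⊆ K₀, Minimal (· ∈ continuaMeeting A S) Z := by
  refine zorn_superset_nonempty _ (fun c hcF hc hcne => ?_) K₀ hK₀
  have hcd : DirectedOn (· ⊇ ·) c := fun K hK L hL =>
    (hc.total hK hL).elim (fun h => ⟨K, hK, subset_rfl, h⟩) fun h => ⟨L, hL, h, subset_rfl⟩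
  have : Nonempty c := hcne.to_subtype
  refine ⟨⋂₀ c, ⟨?_, ?_, ?_, ?_⟩, fun K hK => sInter_subset_of_mem hK⟩
  · obtain ⟨K, hK⟩ := hcne
    exact (hcF hK).1.of_isClosed_subset (isClosed_sInter fun L hL => (hcF hL).1.isClosed)
      (sInter_subset_of_mem hK)
  · exact .sInter_of_directedOn hcne hcd (fun K hK => (hcF hK).1) fun K hK => (hcF hK).2.1
  · exact subset_sInter fun K hK => (hcF hK).2.2.1
  · have := IsCompact.nonempty_iInter_of_directed_nonempty_isCompact_isClosed
      (fun K : c => (K : Set X) ∩ S) (fun K L =>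
        let ⟨N, hN, hKN, hLN⟩ := hcd K K.2 L L.2
        ⟨⟨N, hN⟩, inter_subset_inter_left S hKN, inter_subset_inter_left S hLN⟩)
      (fun K => (hcF K.2).2.2.2) (fun K => (hcF K.2).1.inter_right hS)
      (fun K => (hcF K.2).1.isClosed.inter hS)
    rwa [← iInter_inter, ← sInter_eq_iInter] at this

theorem indecomposableSet_continuumHull_closure {V D₁ D₂ : Set X} (hV : IsOpen V)
    (h₁ : V ⊆ closure D₁) (h₂ : V ⊆ closure D₂)
    (hD : ∀ a ∈ D₁, ∀ b ∈ D₂, V ⊆ continuumHull {a, b}) :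
    IndecomposableSet (continuumHull (closure V)) := by
  rintro ⟨H, K, hH, hHc, hK, hKc, -, hKY, hHne, hKne, hHK⟩
  have hmin : ∀ L, IsCompact L → IsPreconnected L → V ⊆ L →
      continuumHull (closure V) ⊆ L :=
    fun L hL hLc hVL => continuumHull_subset hL hLc (closure_minimal hVL hL.isClosed)
  have hVK : ∀ y ∈ V, y ∉ H → y ∈ K := fun y hy hyH =>
    (hHK.ge (subset_continuumHull _ (subset_closure hy))).resolve_left hyH
  obtain ⟨u, huV, huH⟩ : (V \ H).Nonempty := by
    rw [nonempty_iff_ne_empty, Ne, sdiff_eq_empty]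
    exact fun hVH => hHne ((subset_union_left.trans hHK.le).antisymm (hmin H hH hHc.2 hVH))
  have hVH : IsOpen (V \ H) := hV.sdiff hH.isClosed
  obtain ⟨a, ⟨haV, haH⟩, haD⟩ := mem_closure_iff.mp (h₁ huV) _ hVH ⟨huV, huH⟩
  obtain ⟨b, ⟨hbV, hbH⟩, hbD⟩ := mem_closure_iff.mp (h₂ huV) _ hVH ⟨huV, huH⟩
  exact hKne (hKY.antisymm (hmin K hK hKc.2 ((hD a haD b hbD).trans
    (continuumHull_pair_subset hK hKc.2 (hVK a haV haH) (hVK b hbV hbH)))))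

theorem indecomposableSet_of_minimal_continuaMeeting {D S V Z : Set X} (hV : IsOpen V)
    (hZ : Minimal (· ∈ continuaMeeting (closure V) S) Z) (hZD : Z ⊆ closure D)
    (hDS : ∀ d ∈ D, ∀ ζ ∈ S, V ⊆ continuumHull {d, ζ})
    (hSZ : ∀ ζ ∈ S, ∀ w ∈ Z, IsNowhereDense (continuumHull {ζ, w}) → w ∈ S) :
    IndecomposableSet Z := by
  rintro ⟨H, K, hH, hHc, hK, hKc, hHZ, hKZ, hHne, hKne, hHK⟩
  obtain ⟨ζ, hζZ, hζS⟩ := hZ.prop.2.2.2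
  wlog hζH : ζ ∈ H generalizing H K
  · exact this K H hK hKc hH hHc hKZ hHZ hKne hHne (by rwa [union_comm])
      ((hHK.ge hζZ).resolve_left hζH)
  have hmin : ∀ L ⊆ Z, IsCompact L → IsPreconnected L → V ⊆ L → (L ∩ S).Nonempty →
      L = Z :=
    fun L hLZ hL hLc hVL hLS =>
      hZ.eq_of_subset ⟨hL, hLc, closure_minimal hVL hL.isClosed, hLS⟩ hLZ
  have hHD : ∀ d ∈ D, d ∉ H := fun d hd hdH => hHne <| hmin H hHZ hH hHc.2
    ((hDS d hd ζ hζS).trans (continuumHull_pair_subset hH hHc.2 hdH hζH)) ⟨ζ, hζH, hζS⟩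
  have hHn : IsNowhereDense H := by
    refine hH.isClosed.isNowhereDense_iff.mpr (eq_empty_of_forall_notMem fun u hu => ?_)
    obtain ⟨d, hdH, hdD⟩ :=
      mem_closure_iff.mp (hZD (hHZ (interior_subset hu))) _ isOpen_interior hu
    exact hHD d hdD (interior_subset hdH)
  have hVK : V ⊆ K := hV.subset_of_subset_union_isNowhereDense hK.isClosed hHn
    (by rw [union_comm, hHK]; exact subset_closure.trans hZ.prop.2.2.1)
  obtain ⟨w, -, hwH, hwK⟩ := isPreconnected_closed_iff.mp hZ.prop.2.1 H K hH.isClosed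
    hK.isClosed hHK.ge ⟨ζ, hζZ, hζH⟩ (hKc.nonempty.mono fun k hk => ⟨hKZ hk, hk⟩)
  have hwS : w ∈ S := hSZ ζ hζS w (hHZ hwH)
    (hHn.mono (continuumHull_pair_subset hH hHc.2 hζH hwH))
  exact hKne (hmin K hKZ hK hKc.2 hVK ⟨w, hwK, hwS⟩)

end Indecomposable

section MeagerComposantClosure

variable {X : Type} [TopologicalSpace X] [T2Space X] [CompactSpace X] [PreconnectedSpace X]

theorem exists_indecomposable_of_isNowhereDense (hX : HereditarilyUnicoherent X) {x z : X}
    (hzx : z ∈ closure (MeagerComposant X x)) (hz : z ∉ MeagerComposant X x)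
    (hS : IsNowhereDense (closure (MeagerComposant X x) ∩ closure (MeagerComposant X z))) :
    ∃ K ⊆ closure (MeagerComposant X x), IsCompact K ∧ IsConnected K ∧
      IndecomposableSet K ∧ (interior K).Nonempty := by
  set M := MeagerComposant X x
  set S := closure M ∩ closure (MeagerComposant X z)
  have hzz : z ∈ MeagerComposant X z := by
    refine ⟨{z}, ⟨isCompact_singleton, isConnected_singleton, ?_, rfl⟩, rfl⟩
    refine isClosed_singleton.isNowhereDense_iff.mpr (eq_empty_of_forall_notMem fun u hu => ?_)
    obtain ⟨m, hm, hmM⟩ := mem_closure_iff.mp hzx _ isOpen_interior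
      (mem_singleton_iff.mp (interior_subset hu) ▸ hu)
    exact hz (mem_singleton_iff.mp (interior_subset hm) ▸ hmM)
  have hxM : x ∈ M := self_mem_meagerComposant (closure_nonempty_iff.mp ⟨z, hzx⟩)
  have hzS : z ∈ S := ⟨hzx, subset_closure hzz⟩
  have hSz : ∀ ζ ∈ S, IsNowhereDense (continuumHull {z, ζ}) := fun ζ hζ =>
    hS.mono (continuumHull_pair_subset (isClosed_closure.inter isClosed_closure).isCompact
      (isPreconnected_closure_inter_closure hX (isPreconnected_meagerComposant x)
        (isPreconnected_meagerComposant z)) hzS hζ)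
  set T := continuumHull {x, z}
  have hV : (interior T).Nonempty := by
    rw [nonempty_iff_ne_empty]
    exact fun h => hz ((mem_meagerComposant_iff hX).mpr
      ((isClosed_continuumHull _).isNowhereDense_iff.mpr h))
  have hVS : ∀ m ∈ M, ∀ ζ ∈ S, interior T ⊆ continuumHull {m, ζ} := by
    intro m hm ζ hζ
    have hVζx : interior T ⊆ continuumHull {ζ, x} := by
      rw [pair_comm]
      exact isOpen_interior.subset_continuumHull_pair hX interior_subset (hSz ζ hζ)
    rw [pair_comm]
    exact isOpen_interior.subset_continuumHull_pair hX hVζx ((mem_meagerComposant_iff hX).mp hm)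
  have hTM : T ⊆ closure M := continuumHull_pair_subset isClosed_closure.isCompact
    (isPreconnected_meagerComposant x).closure (subset_closure hxM) hzx
  obtain ⟨Z, hZT, hZ⟩ := exists_minimal_continuaMeeting (A := closure (interior T)) (K₀ := T)
    (isClosed_closure.inter isClosed_closure) ⟨isCompact_continuumHull _,
      isPreconnected_continuumHull hX _,
      (isClosed_continuumHull _).closure_subset_iff.mpr interior_subset,
      ⟨z, right_mem_continuumHull x z, hzS⟩⟩
  have hZM : Z ⊆ closure M := hZT.trans hTM
  refine ⟨Z, hZM, hZ.prop.1, ⟨hZ.prop.2.2.2.mono inter_subset_left, hZ.prop.2.1⟩,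
    indecomposableSet_of_minimal_continuaMeeting isOpen_interior hZ hZM hVS ?_,
    hV.mono (interior_maximal (subset_closure.trans hZ.prop.2.2.1) isOpen_interior)⟩
  exact fun ζ hζ w hw hζw => ⟨hZM hw, subset_closure
    ((mem_meagerComposant_iff hX).mpr ((hSz ζ hζ).continuumHull_pair_trans hX hζw))⟩

theorem exists_indecomposable_of_not_isNowhereDense (hX : HereditarilyUnicoherent X) {x z : X}
    (hz : z ∉ MeagerComposant X x)
    (hS : ¬ IsNowhereDense (closure (MeagerComposant X x) ∩ closure (MeagerComposant X z))) :
    ∃ K ⊆ closure (MeagerComposant X x), IsCompact K ∧ IsConnected K ∧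
      IndecomposableSet K ∧ (interior K).Nonempty := by
  set M := MeagerComposant X x
  set N := MeagerComposant X z
  set S := closure M ∩ closure N
  have hSk : IsCompact S := (isClosed_closure.inter isClosed_closure).isCompact
  have hSc : IsPreconnected S := isPreconnected_closure_inter_closure hX
    (isPreconnected_meagerComposant x) (isPreconnected_meagerComposant z)
  obtain ⟨u, hu⟩ : (interior S).Nonempty := by
    rw [nonempty_iff_ne_empty]
    exact fun h => hS ((isClosed_closure.inter isClosed_closure).isNowhereDense_iff.mpr h)
  obtain ⟨m, hmS, hmM⟩ := mem_closure_iff.mp (interior_subset hu).1 _ isOpen_interior hu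
  obtain ⟨a, haS, haN⟩ := mem_closure_iff.mp (interior_subset hu).2 _ isOpen_interior hu
  have hxm := (mem_meagerComposant_iff hX).mp hmM
  have hza := (mem_meagerComposant_iff hX).mp haN
  have hmx : IsNowhereDense (continuumHull {m, x}) := by rwa [pair_comm]
  have haz : IsNowhereDense (continuumHull {a, z}) := by rwa [pair_comm]
  set T := continuumHull {m, a}
  have hTS : T ⊆ S :=
    continuumHull_pair_subset hSk hSc (interior_subset hmS) (interior_subset haS)
  have hV : (interior T).Nonempty := by
    rw [nonempty_iff_ne_empty]
    intro h
    have hT : IsNowhereDense T := (isClosed_continuumHull _).isNowhereDense_iff.mpr h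
    exact hz ((mem_meagerComposant_iff hX).mpr
      ((hxm.continuumHull_pair_trans hX hT).continuumHull_pair_trans hX haz))
  have hVD : ∀ b ∈ M, ∀ c ∈ N, interior T ⊆ continuumHull {b, c} := by
    intro b hb c hc
    have hVmc : interior T ⊆ continuumHull {c, m} := by
      rw [pair_comm]
      exact isOpen_interior.subset_continuumHull_pair hX interior_subset
        (haz.continuumHull_pair_trans hX ((mem_meagerComposant_iff hX).mp hc))
    rw [pair_comm]
    exact isOpen_interior.subset_continuumHull_pair hX hVmc
      (hmx.continuumHull_pair_trans hX ((mem_meagerComposant_iff hX).mp hb))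
  have hVS : interior T ⊆ S := interior_subset.trans hTS
  refine ⟨continuumHull (closure (interior T)),
    (continuumHull_subset hSk hSc
      (closure_minimal hVS (isClosed_closure.inter isClosed_closure))).trans inter_subset_left,
    isCompact_continuumHull _,
    ⟨(hV.mono subset_closure).mono (subset_continuumHull _), isPreconnected_continuumHull hX _⟩,
    indecomposableSet_continuumHull_closure isOpen_interior (hVS.trans inter_subset_left)
      (hVS.trans inter_subset_right) hVD,
    hV.mono (interior_maximal (subset_closure.trans (subset_continuumHull _)) isOpen_interior)⟩

end MeagerComposantClosure

theorem exists_indecomposable_with_interior_of_not_closed_general (X : Type) [MetricSpace X] [CompactSpace X] [ConnectedSpace X]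
    (hX : HereditarilyUnicoherent X) (x : X)
    (hnc : ¬ IsClosed (MeagerComposant X x)) :
    ∃ K : Set X, K ⊆ closure (MeagerComposant X x) ∧ IsCompact K ∧ IsConnected K ∧
      IndecomposableSet K ∧ (interior K).Nonempty := by
  obtain ⟨z, hzx, hz⟩ := not_subset.mp (mt isClosed_of_closure_subset hnc)
  by_cases hS : IsNowhereDense (closure (MeagerComposant X x) ∩ closure (MeagerComposant X z))
  · exact exists_indecomposable_of_isNowhereDense hX hzx hz hS
  · exact exists_indecomposable_of_not_isNowhereDense hX hz hS

/-- If a meager composant of a hereditarily unicoherent continuum is not closed, then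
its closure contains an indecomposable subcontinuum with nonempty interior in `X`. -/
theorem exists_indecomposable_with_interior_of_not_closed (X : Type) [MetricSpace X] [CompactSpace X] [ConnectedSpace X] [Nonempty X]
    (hX : HereditarilyUnicoherent X) (x : X)
    (hnc : ¬ IsClosed (MeagerComposant X x)) :
    ∃ K : Set X, K ⊆ closure (MeagerComposant X x) ∧ IsCompact K ∧ IsConnected K ∧
      IndecomposableSet K ∧ (interior K).Nonempty :=
  exists_indecomposable_with_interior_of_not_closed_general X hX x hnc
end
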